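/- Let G be a directed mixed graph and P a DPAG that contains G, such that all unshielded triples in P have been oriented according to FCI rule R0 using the σ-separations of G; that is, there is a function SepSet assigning to each non-adjacent pair (a,c) of P a set Z ⊆ V ∖ {a,c} such that a and c are σ-separated given Z in G, and for every unshielded triple ⟨a,b,c⟩ in P (b adjacent in P to both a and c, a and c non-adjacent in P), both edge marks at b are arrowheads if and only if b ∉ SepSet(a,c). Let i ≠ j be two nodes of P. If there is a directed path from i to j in P, or if there exist uncovered possibly directed paths from i to j in P of the forms i,u,…,j and i,v,…,j such that u and v are distinct non-adjacent nodes in P, then i ∈ an(G,j). -/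
import Mathlib


namespace CausalGraphs

variable {V : Type*}

/-- A directed mixed graph (DMG): directed edges `dir` (`i → j`) and
bidirected edges `bi` (`i ↔ j`), with no self-loops. -/
structure DMG (V : Type*) where
  dir : V → V → Prop
  bi : V → V → Prop
  dir_irrefl : ∀ i, ¬ dir i i
  bi_irrefl : ∀ i, ¬ bi i i

namespace DMG

/-- `G.Anc i j`: `i ∈ an(G, j)`, i.e. there is a (possibly trivial) directed path
from `i` to `j` in `G`. -/
def Anc (G : DMG V) (i j : V) : Prop :=
  Relation.ReflTransGen G.dir i j

/-- `G.Scc i j`: `i ∈ scc(G, j)`, i.e. `i` and `j` lie in the same strongly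
connected component of `G`. -/
def Scc (G : DMG V) (i j : V) : Prop :=
  G.Anc i j ∧ G.Anc j i

/-- There is a bidirected edge between `i` and `j` (bidirected edges are unordered). -/
def BiEdge (G : DMG V) (i j : V) : Prop :=
  G.bi i j ∨ G.bi j i

/-- `G` has no directed cycle (i.e. `G` is an ADMG). -/
def Acyclic (G : DMG V) : Prop :=
  ∀ i j, G.dir i j → ¬ G.Anc j i

end DMG

/-- A walk of length `len` is recorded by its vertices `vert 0, …, vert len` and,
for each edge index `k < len`, the edge marks: `intoL k` (resp. `intoR k`) is `true`
iff the `k`-th edge has an arrowhead at `vert k` (resp. at `vert (k+1)`). -/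
structure Walk (V : Type*) where
  len : ℕ
  vert : ℕ → V
  intoL : ℕ → Bool
  intoR : ℕ → Bool

namespace Walk

def first (w : Walk V) : V := w.vert 0

def last (w : Walk V) : V := w.vert w.len

/-- The walk is an actual walk in a DMG `G`: each step traverses a directed edge
(in either direction) or a bidirected edge of `G`, with the corresponding marks. -/
def ValidOn (G : DMG V) (w : Walk V) : Prop :=
  ∀ k, k < w.len →
    (w.intoL k = false ∧ w.intoR k = true ∧ G.dir (w.vert k) (w.vert (k+1))) ∨
    (w.intoL k = true ∧ w.intoR k = false ∧ G.dir (w.vert (k+1)) (w.vert k)) ∨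
    (w.intoL k = true ∧ w.intoR k = true ∧ G.BiEdge (w.vert k) (w.vert (k+1)))

/-- `k` is a non-endpoint position of the walk. -/
def Interior (w : Walk V) (k : ℕ) : Prop := 0 < k ∧ k < w.len

/-- The non-endpoint node `vert k` is a collider on the walk: both adjacent
edges have an arrowhead at it. -/
def ColliderAt (w : Walk V) (k : ℕ) : Prop :=
  w.Interior k ∧ w.intoR (k-1) = true ∧ w.intoL k = true

/-- The non-endpoint node `vert k` is a non-collider on the walk. -/
def NonColliderAt (w : Walk V) (k : ℕ) : Prop :=
  w.Interior k ∧ ¬ (w.intoR (k-1) = true ∧ w.intoL k = true)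

/-- The edge on the first-endpoint side of position `k` is directed out of
`vert k`, pointing to the neighbour `vert (k-1)` on the walk. -/
def PointsLeft (w : Walk V) (k : ℕ) : Prop :=
  w.intoL (k-1) = true ∧ w.intoR (k-1) = false

/-- The edge on the last-endpoint side of position `k` is directed out of
`vert k`, pointing to the neighbour `vert (k+1)` on the walk. -/
def PointsRight (w : Walk V) (k : ℕ) : Prop :=
  w.intoL k = false ∧ w.intoR k = true

/-- The walk is a path: all its vertices are distinct. -/
def IsPath (w : Walk V) : Prop :=
  ∀ a, a ≤ w.len → ∀ b, b ≤ w.len → w.vert a = w.vert b → a = b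

/-- The walk is into its first node (arrowhead at the first node). -/
def IntoFirst (w : Walk V) : Prop := 0 < w.len ∧ w.intoL 0 = true

/-- The walk is into its last node (arrowhead at the last node). -/
def IntoLast (w : Walk V) : Prop := 0 < w.len ∧ w.intoR (w.len - 1) = true

/-- The walk is σ-blocked by the set `C`. -/
def SigmaBlocked (G : DMG V) (w : Walk V) (C : Set V) : Prop :=
  w.first ∈ C ∨ w.last ∈ C ∨
  (∃ k, w.ColliderAt k ∧ ¬ ∃ c ∈ C, G.Anc (w.vert k) c) ∨
  (∃ k, w.NonColliderAt k ∧ w.vert k ∈ C ∧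
    ((w.PointsLeft k ∧ ¬ G.Scc (w.vert k) (w.vert (k-1))) ∨
     (w.PointsRight k ∧ ¬ G.Scc (w.vert k) (w.vert (k+1)))))

/-- The walk is d-blocked by the set `C`. -/
def DBlocked (G : DMG V) (w : Walk V) (C : Set V) : Prop :=
  w.first ∈ C ∨ w.last ∈ C ∨
  (∃ k, w.ColliderAt k ∧ ¬ ∃ c ∈ C, G.Anc (w.vert k) c) ∨
  (∃ k, w.NonColliderAt k ∧ w.vert k ∈ C)

/-- The walk is inducing: every collider on it is an ancestor of one of the two
endpoints, and every non-endpoint non-collider only has outgoing directed edges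
to its neighbours on the walk that lie in the same strongly connected component. -/
def Inducing (G : DMG V) (w : Walk V) : Prop :=
  (∀ k, w.ColliderAt k → G.Anc (w.vert k) w.first ∨ G.Anc (w.vert k) w.last) ∧
  (∀ k, w.NonColliderAt k →
    (w.PointsLeft k → G.Scc (w.vert k) (w.vert (k-1))) ∧
    (w.PointsRight k → G.Scc (w.vert k) (w.vert (k+1))))

end Walk

namespace DMG

/-- `A` and `B` are σ-separated given `C` in `G`. -/
def SigmaSep (G : DMG V) (A B C : Set V) : Prop :=
  ∀ w : Walk V, w.ValidOn G → w.first ∈ A → w.last ∈ B → w.SigmaBlocked G C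

/-- `A` and `B` are d-separated given `C` in `G`. -/
def DSep (G : DMG V) (A B C : Set V) : Prop :=
  ∀ w : Walk V, w.ValidOn G → w.first ∈ A → w.last ∈ B → w.DBlocked G C

/-- Nodes `i` and `j` are σ-connected given `C` in `G`. -/
def SigmaConnected (G : DMG V) (i j : V) (C : Set V) : Prop :=
  ∃ w : Walk V, w.ValidOn G ∧ w.first = i ∧ w.last = j ∧ ¬ w.SigmaBlocked G C

/-- The σ-independence model of `G`. -/
def IMsigma (G : DMG V) : Set (Set V × Set V × Set V) :=
  { t | G.SigmaSep t.1 t.2.1 t.2.2 }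

/-- The d-independence model of `G`. -/
def IMd (G : DMG V) : Set (Set V × Set V × Set V) :=
  { t | G.DSep t.1 t.2.1 t.2.2 }

/-- There is an inducing walk between `i` and `j` in `G`. -/
def InducingWalk (G : DMG V) (i j : V) : Prop :=
  ∃ w : Walk V, w.ValidOn G ∧ w.first = i ∧ w.last = j ∧ w.Inducing G

/-- There is an inducing path between `i` and `j` in `G`. -/
def InducingPath (G : DMG V) (i j : V) : Prop :=
  ∃ w : Walk V, w.ValidOn G ∧ w.first = i ∧ w.last = j ∧ w.IsPath ∧ w.Inducing G

/-- There is an inducing walk between `i` and `j` in `G` that is into `j`. -/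
def InducingWalkIntoLast (G : DMG V) (i j : V) : Prop :=
  ∃ w : Walk V, w.ValidOn G ∧ w.first = i ∧ w.last = j ∧ w.Inducing G ∧ w.IntoLast

/-- There is an inducing walk between `i` and `j` in `G` that is into both `i` and `j`. -/
def InducingWalkIntoBoth (G : DMG V) (i j : V) : Prop :=
  ∃ w : Walk V, w.ValidOn G ∧ w.first = i ∧ w.last = j ∧ w.Inducing G ∧ w.IntoFirst ∧ w.IntoLast

/-- `G'` is an acyclification of `G`. -/
def IsAcyclification (G G' : DMG V) : Prop :=
  G'.Acyclic ∧
  (∀ i j, ¬ G.Scc i j →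
    ((G'.dir i j ↔ ∃ k, G.Scc k j ∧ G.dir i k) ∧
     (G'.bi i j ↔ ∃ k, G.Scc k j ∧ G.bi i k))) ∧
  (∀ i j, i ≠ j → G.Scc i j → (G'.dir i j ∨ G'.dir j i ∨ G'.bi i j))

end DMG

/-- Edge marks of a partial ancestral graph. -/
inductive Mark : Type
  | tail
  | arrow
  | circle
deriving DecidableEq

/-- A directed partial ancestral graph (DPAG). `mark i j` is the edge mark at `j`
on the edge between `i` and `j` (only meaningful when `adj i j`). Allowed edge
types are `→`, `←`, `↔`, `∘→`, `←∘` and `∘—∘`; there are no directed and no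
almost directed cycles. -/
structure DPAG (V : Type*) where
  adj : V → V → Prop
  mark : V → V → Mark
  adj_symm : ∀ i j, adj i j → adj j i
  adj_irrefl : ∀ i, ¬ adj i i
  tail_imp_arrow : ∀ i j, adj i j → mark j i = Mark.tail → mark i j = Mark.arrow
  no_directed_cycle : ∀ i, ¬ Relation.TransGen
    (fun a b => adj a b ∧ mark a b = Mark.arrow ∧ mark b a = Mark.tail) i i
  no_almost_directed_cycle : ∀ i j, Relation.ReflTransGen
    (fun a b => adj a b ∧ mark a b = Mark.arrow ∧ mark b a = Mark.tail) i j →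
    ¬ (adj i j ∧ mark i j = Mark.arrow ∧ mark j i = Mark.arrow)

/-- A directed edge `i → j` with respect to raw adjacency/mark data. -/
def DirEdgeOn (adj : V → V → Prop) (mark : V → V → Mark) (i j : V) : Prop :=
  adj i j ∧ mark i j = Mark.arrow ∧ mark j i = Mark.tail

/-- The directed edge `i → j` is definitely visible, with respect to raw
adjacency/mark data: there is a node `k` not adjacent to `j` such that either
the edge between `k` and `i` is into `i`, or there is a path between `k` and `i`
that is into `i` on which every non-endpoint node is a collider and a parent of `j`. -/
def DefinitelyVisibleOn (adj : V → V → Prop) (mark : V → V → Mark) (i j : V) : Prop :=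
  DirEdgeOn adj mark i j ∧
  ∃ k, ¬ adj k j ∧
    ((adj k i ∧ mark k i = Mark.arrow) ∨
     (∃ n, ∃ p : ℕ → V, 0 < n ∧ p 0 = k ∧ p n = i ∧
       (∀ a, a ≤ n → ∀ b, b ≤ n → p a = p b → a = b) ∧
       (∀ m, m < n → adj (p m) (p (m+1))) ∧
       mark (p (n-1)) i = Mark.arrow ∧
       (∀ m, 0 < m → m < n →
         (mark (p (m-1)) (p m) = Mark.arrow ∧ mark (p (m+1)) (p m) = Mark.arrow) ∧
         DirEdgeOn adj mark (p m) j)))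

namespace DPAG

/-- `i → j` in `P`. -/
def DirEdge (P : DPAG V) (i j : V) : Prop := DirEdgeOn P.adj P.mark i j

/-- `i ↔ j` in `P`. -/
def BiEdge (P : DPAG V) (i j : V) : Prop :=
  P.adj i j ∧ P.mark i j = Mark.arrow ∧ P.mark j i = Mark.arrow

/-- `i *→ j` in `P`: an edge between `i` and `j` with an arrowhead at `j`. -/
def ArrowAt (P : DPAG V) (i j : V) : Prop := P.adj i j ∧ P.mark i j = Mark.arrow

/-- The directed edge `i → j` of `P` is definitely visible in `P`. -/
def DefinitelyVisible (P : DPAG V) (i j : V) : Prop :=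
  DefinitelyVisibleOn P.adj P.mark i j

/-- The DPAG `P` contains the DMG `G`. -/
def Contains (P : DPAG V) (G : DMG V) : Prop :=
  (∀ i j, i ≠ j → (P.adj i j ↔ G.InducingPath i j)) ∧
  (∀ i j, P.ArrowAt i j → ¬ G.Anc j i) ∧
  (∀ i j, P.DirEdge i j → G.Anc i j)

/-- `p 0, …, p n` is a possibly directed path in `P`: consecutive vertices are
adjacent, no edge has an arrowhead at the endpoint nearer `p 0`, and all
vertices are distinct. -/
def PossiblyDirectedPathOn (P : DPAG V) (n : ℕ) (p : ℕ → V) : Prop :=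
  (∀ k, k < n → P.adj (p k) (p (k+1)) ∧ P.mark (p (k+1)) (p k) ≠ Mark.arrow) ∧
  (∀ a, a ≤ n → ∀ b, b ≤ n → p a = p b → a = b)

/-- The path `p 0, …, p n` is uncovered: every consecutive triple is unshielded. -/
def UncoveredOn (P : DPAG V) (n : ℕ) (p : ℕ → V) : Prop :=
  ∀ k, k + 2 ≤ n → ¬ P.adj (p k) (p (k+2))

/-- There is a possibly directed path from `i` to `j` in `P`. -/
def PDPath (P : DPAG V) (i j : V) : Prop :=
  ∃ n, ∃ p : ℕ → V, p 0 = i ∧ p n = j ∧ P.PossiblyDirectedPathOn n p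

end DPAG

/-- JCI Assumption 1 (exogeneity): no system variable causes any context variable
(`K` is the set of context nodes; its complement is the set of system nodes). -/
def JCI1 (G : DMG V) (K : Set V) : Prop :=
  ∀ i k, i ∉ K → k ∈ K → ¬ G.dir i k

/-- JCI Assumption 2 (randomization): no pair of a system and a context variable
is confounded. -/
def JCI2 (G : DMG V) (K : Set V) : Prop :=
  ∀ i k, i ∉ K → k ∈ K → ¬ G.BiEdge i k

/-- JCI Assumption 3 (genericity): every pair of distinct context variables is
connected by a bidirected edge and by no directed edge. -/
def JCI3 (G : DMG V) (K : Set V) : Prop :=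
  ∀ k k', k ∈ K → k' ∈ K → k ≠ k' → (G.bi k k' ∧ ¬ G.dir k k')

/-- An independence model on `V`: a set of triples of subsets of `V`. -/
abbrev IndepModel (V : Type*) := Set (Set V × Set V × Set V)

/-- Background knowledge `Ψ` is compatible with the acyclification. -/
def CompatibleWithAcyclification (Ψ : DMG V → Prop) : Prop :=
  ∀ G : DMG V, Ψ G →
    (∃ G', G.IsAcyclification G' ∧ Ψ G') ∧
    (∀ i j : V, G.Anc i j → ∃ G', G.IsAcyclification G' ∧ Ψ G' ∧ G'.Anc i j) ∧
    (∀ i j : V, ¬ G.Anc i j → ∀ G', G.IsAcyclification G' → Ψ G' → ¬ G'.Anc i j)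

section Aux

variable {G : DMG V} {P : DPAG V} {Z : Set V}

private lemma anc_trans {a b c : V} (h1 : G.Anc a b) (h2 : G.Anc b c) : G.Anc a c :=
  Relation.ReflTransGen.trans h1 h2

private lemma exists_dirFun {x y : V} (h : G.Anc x y) :
    ∃ m, ∃ z : ℕ → V, z 0 = x ∧ z m = y ∧ ∀ t, t < m → G.dir (z t) (z (t+1)) := by
  induction h with
  | refl => exact ⟨0, fun _ => x, rfl, rfl, fun t ht => absurd ht (by omega)⟩
  | @tail b c hxb hbc ih =>
      obtain ⟨m, z, hz0, hzm, hstep⟩ := ih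
      refine ⟨m + 1, fun t => if t ≤ m then z t else c, by simp [hz0], by simp, ?_⟩
      intro t ht
      rcases Nat.lt_or_ge t m with h' | h'
      · simpa [Nat.le_of_lt h', Nat.succ_le_of_lt h'] using hstep t h'
      · have ht' : t = m := by omega
        subst ht'
        simpa [hzm] using hbc

private lemma dirFun_anc {m : ℕ} {z : ℕ → V}
    (hstep : ∀ t, t < m → G.dir (z t) (z (t+1))) :
    ∀ s t, s ≤ t → t ≤ m → G.Anc (z s) (z t) := by
  intro s t hst htm
  induction t with
  | zero =>
      have hs : s = 0 := by omega
      subst hs; exact Relation.ReflTransGen.refl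
  | succ t ih =>
      rcases Nat.lt_or_ge s (t+1) with h' | h'
      · exact Relation.ReflTransGen.tail (ih (by omega) (by omega)) (hstep t (by omega))
      · have hs : s = t + 1 := by omega
        subst hs; exact Relation.ReflTransGen.refl

/-- Non-colliders on the walk never σ-block given `Z`. -/
private def NCok (G : DMG V) (Z : Set V) (w : Walk V) : Prop :=
  ∀ k, w.NonColliderAt k → w.vert k ∈ Z →
    (w.PointsLeft k → G.Scc (w.vert k) (w.vert (k-1))) ∧
    (w.PointsRight k → G.Scc (w.vert k) (w.vert (k+1)))

/-- Every collider on the walk is an ancestor of `Z`. -/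
private def ColOk (G : DMG V) (Z : Set V) (w : Walk V) : Prop :=
  ∀ k, w.ColliderAt k → ∃ c ∈ Z, G.Anc (w.vert k) c

/-- There is a σ-connecting-given-`Z` walk from `a` to `b` that is into `b`. -/
private def ConnInto (G : DMG V) (Z : Set V) (a b : V) : Prop :=
  ∃ w : Walk V, w.ValidOn G ∧ w.first = a ∧ w.last = b ∧ w.IntoLast ∧
    NCok G Z w ∧ ColOk G Z w

/-- Two connecting walks into `b ∈ Z` concatenate (reversing the second) into a
σ-connecting walk from `a` to `c` given `Z`, contradicting σ-separation. -/
private lemma not_sigmaSep_of_connInto {a b c : V}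
    (h1 : ConnInto G Z a b) (h2 : ConnInto G Z c b)
    (hbZ : b ∈ Z) (haZ : a ∉ Z) (hcZ : c ∉ Z)
    (hsep : G.SigmaSep {a} {c} Z) : False := by
  classical
  obtain ⟨w1, hv1, hf1, hl1, hi1, hn1, hc1⟩ := h1
  obtain ⟨w2, hv2, hf2, hl2, hi2, hn2, hc2⟩ := h2
  have hn1p : 0 < w1.len := hi1.1
  have hn2p : 0 < w2.len := hi2.1
  set n1 := w1.len with hn1def
  set n2 := w2.len with hn2def
  set W : Walk V := ⟨n1 + n2,
      fun p => if p < n1 then w1.vert p else w2.vert (n2 - (p - n1)),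
      fun s => if s < n1 then w1.intoL s else w2.intoR (n2 - 1 - (s - n1)),
      fun s => if s < n1 then w1.intoR s else w2.intoL (n2 - 1 - (s - n1))⟩ with hWdef
  have hWlen : W.len = n1 + n2 := rfl
  have hv_lt : ∀ p, p < n1 → W.vert p = w1.vert p := by
    intro p hp; show (if p < n1 then _ else _) = _; rw [if_pos hp]
  have hv_ge : ∀ p, n1 ≤ p → W.vert p = w2.vert (n2 - (p - n1)) := by
    intro p hp; show (if p < n1 then _ else _) = _; rw [if_neg (by omega)]
  have hv_le : ∀ p, p ≤ n1 → W.vert p = w1.vert p := by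
    intro p hp
    rcases Nat.lt_or_ge p n1 with h | h
    · exact hv_lt p h
    · have hp' : p = n1 := by omega
      rw [hp', hv_ge n1 le_rfl, Nat.sub_self, Nat.sub_zero]
      show w2.vert n2 = w1.vert n1
      exact hl2.trans hl1.symm
  have hL_lt : ∀ s, s < n1 → W.intoL s = w1.intoL s := by
    intro s hs; show (if s < n1 then _ else _) = _; rw [if_pos hs]
  have hL_ge : ∀ s, n1 ≤ s → W.intoL s = w2.intoR (n2 - 1 - (s - n1)) := by
    intro s hs; show (if s < n1 then _ else _) = _; rw [if_neg (by omega)]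
  have hR_lt : ∀ s, s < n1 → W.intoR s = w1.intoR s := by
    intro s hs; show (if s < n1 then _ else _) = _; rw [if_pos hs]
  have hR_ge : ∀ s, n1 ≤ s → W.intoR s = w2.intoL (n2 - 1 - (s - n1)) := by
    intro s hs; show (if s < n1 then _ else _) = _; rw [if_neg (by omega)]
  have hWfirst : W.first = a := by
    show W.vert 0 = a; rw [hv_lt 0 hn1p]; exact hf1
  have hWlast : W.last = c := by
    show W.vert (n1 + n2) = c
    rw [hv_ge _ (by omega)]
    have : n2 - (n1 + n2 - n1) = 0 := by omega
    rw [this]; exact hf2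
  have hWvalid : W.ValidOn G := by
    intro s hs
    rcases Nat.lt_or_ge s n1 with h | h
    · have e1 : W.vert s = w1.vert s := hv_lt s h
      have e2 : W.vert (s+1) = w1.vert (s+1) := hv_le (s+1) (by omega)
      rw [hL_lt s h, hR_lt s h, e1, e2]
      exact hv1 s h
    · have hq : s - n1 < n2 := by omega
      set e := n2 - 1 - (s - n1) with hedef
      have he : e < n2 := by omega
      have e1 : W.vert s = w2.vert (e + 1) := by
        rw [hv_ge s h]; congr 1; omega
      have e2 : W.vert (s+1) = w2.vert e := by
        rw [hv_ge (s+1) (by omega)]; congr 1; omega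
      rw [hL_ge s h, hR_ge s h, e1, e2]
      rcases hv2 e he with ⟨hA, hB, hC⟩ | ⟨hA, hB, hC⟩ | ⟨hA, hB, hC⟩
      · exact Or.inr (Or.inl ⟨hB, hA, hC⟩)
      · exact Or.inl ⟨hB, hA, hC⟩
      · exact Or.inr (Or.inr ⟨hB, hA, Or.symm hC⟩)
  have hblocked := hsep W hWvalid (by rw [hWfirst]; rfl) (by rw [hWlast]; rfl)
  rcases hblocked with hB | hB | ⟨p, hcolp, hno⟩ | ⟨p, hncp, hpZ, hbl⟩
  · rw [hWfirst] at hB; exact haZ hB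
  · rw [hWlast] at hB; exact hcZ hB
  · -- collider case: show all colliders are ancestors of Z
    obtain ⟨⟨hp0, hplen⟩, hcr, hcl⟩ := hcolp
    rcases Nat.lt_or_ge p n1 with h | h
    · refine hno ?_
      have : w1.ColliderAt p := by
        refine ⟨⟨hp0, by omega⟩, ?_, ?_⟩
        · rw [← hR_lt (p-1) (by omega)]; exact hcr
        · rw [← hL_lt p h]; exact hcl
      obtain ⟨d, hdZ, hd⟩ := hc1 p this
      exact ⟨d, hdZ, by rwa [hv_lt p h]⟩
    · rcases Nat.eq_or_lt_of_le h with h' | h'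
      · refine hno ⟨b, hbZ, ?_⟩
        have : W.vert p = b := by
          rw [hv_ge p h, ← h']
          simp only [Nat.sub_self, Nat.sub_zero]
          exact hl2
        rw [this]
        exact Relation.ReflTransGen.refl
      · -- p > n1
        set q := n2 - (p - n1) with hqdef
        have hq0 : 0 < q := by omega
        have hqn : q < n2 := by omega
        have hcq : w2.ColliderAt q := by
          refine ⟨⟨hq0, hqn⟩, ?_, ?_⟩
          · have := hcl
            rw [hL_ge p h] at this
            have he : n2 - 1 - (p - n1) = q - 1 := by omega
            rwa [he] at this
          · have := hcr
            rw [hR_ge (p-1) (by omega)] at this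
            have he : n2 - 1 - (p - 1 - n1) = q := by omega
            rwa [he] at this
        obtain ⟨d, hdZ, hd⟩ := hc2 q hcq
        refine hno ⟨d, hdZ, ?_⟩
        have : W.vert p = w2.vert q := by rw [hv_ge p h]
        rwa [this]
  · -- non-collider case
    obtain ⟨⟨hp0, hplen⟩, hncm⟩ := hncp
    rcases Nat.lt_or_ge p n1 with h | h
    · have hnc1 : w1.NonColliderAt p := by
        refine ⟨⟨hp0, by omega⟩, ?_⟩
        intro ⟨hx, hy⟩
        exact hncm ⟨by rw [hR_lt (p-1) (by omega)]; exact hx,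
                    by rw [hL_lt p h]; exact hy⟩
      have hvZ : w1.vert p ∈ Z := by rwa [hv_lt p h] at hpZ
      have hsccs := hn1 p hnc1 hvZ
      rcases hbl with ⟨hPL, hnscc⟩ | ⟨hPR, hnscc⟩
      · refine hnscc ?_
        have hPL1 : w1.PointsLeft p := by
          constructor
          · rw [← hL_lt (p-1) (by omega)]; exact hPL.1
          · rw [← hR_lt (p-1) (by omega)]; exact hPL.2
        have := hsccs.1 hPL1
        rwa [hv_lt p h, hv_le (p-1) (by omega)]
      · refine hnscc ?_
        have hPR1 : w1.PointsRight p := by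
          constructor
          · rw [← hL_lt p h]; exact hPR.1
          · rw [← hR_lt p h]; exact hPR.2
        have := hsccs.2 hPR1
        rwa [hv_lt p h, hv_le (p+1) (by omega)]
    · rcases Nat.eq_or_lt_of_le h with h' | h'
      · -- p = n1 : it is a collider, contradiction
        refine hncm ⟨?_, ?_⟩
        · rw [hR_lt (p-1) (by omega)]
          have : p - 1 = n1 - 1 := by omega
          rw [this]; exact hi1.2
        · rw [hL_ge p h]
          have : n2 - 1 - (p - n1) = n2 - 1 := by omega
          rw [this]; exact hi2.2
      · -- p > n1
        set q := n2 - (p - n1) with hqdef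
        have hq0 : 0 < q := by omega
        have hqn : q < n2 := by omega
        have eL : W.intoL p = w2.intoR (q - 1) := by
          rw [hL_ge p h]; congr 1; omega
        have eR : W.intoR p = w2.intoL (q - 1) := by
          rw [hR_ge p h]; congr 1; omega
        have eLm : W.intoL (p-1) = w2.intoR q := by
          rw [hL_ge (p-1) (by omega)]; congr 1; omega
        have eRm : W.intoR (p-1) = w2.intoL q := by
          rw [hR_ge (p-1) (by omega)]; congr 1; omega
        have hnc2 : w2.NonColliderAt q := by
          refine ⟨⟨hq0, hqn⟩, ?_⟩
          intro ⟨hx, hy⟩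
          exact hncm ⟨by rw [eRm]; exact hy, by rw [eL]; exact hx⟩
        have hvZ : w2.vert q ∈ Z := by rwa [hv_ge p h] at hpZ
        have hsccs := hn2 q hnc2 hvZ
        have evp : W.vert p = w2.vert q := hv_ge p h
        rcases hbl with ⟨hPL, hnscc⟩ | ⟨hPR, hnscc⟩
        · -- W points left at p ↔ w2 points right at q
          have hPR2 : w2.PointsRight q := by
            constructor
            · rw [← eRm]; exact hPL.2
            · rw [← eLm]; exact hPL.1
          have := hsccs.2 hPR2
          refine hnscc ?_
          have evm : W.vert (p-1) = w2.vert (q+1) := by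
            rw [hv_ge (p-1) (by omega)]; congr 1; omega
          rwa [evp, evm]
        · have hPL2 : w2.PointsLeft q := by
            constructor
            · rw [← eR]; exact hPR.2
            · rw [← eL]; exact hPR.1
          have := hsccs.1 hPL2
          refine hnscc ?_
          have evm : W.vert (p+1) = w2.vert (q-1) := by
            rw [hv_ge (p+1) (by omega)]; congr 1; omega
          rwa [evp, evm]

/-- Surgery lemma: a walk into `b` whose non-colliders never σ-block and whose
colliders are ancestors of `Z` or of the first node `a` can be turned into a
σ-connecting walk into `b`, by rerouting at the rightmost bad collider. -/
private lemma surgery {w : Walk V} {a b : V}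
    (hval : w.ValidOn G) (hfst : w.first = a) (hlst : w.last = b)
    (hinto : w.IntoLast) (hnc : NCok G Z w)
    (hcol : ∀ k, w.ColliderAt k → (∃ c ∈ Z, G.Anc (w.vert k) c) ∨ G.Anc (w.vert k) a) :
    ConnInto G Z a b := by
  classical
  by_cases hbad : ∃ k, w.ColliderAt k ∧ ¬ ∃ c ∈ Z, G.Anc (w.vert k) c
  case neg =>
    push_neg at hbad
    refine ⟨w, hval, hfst, hlst, hinto, hnc, ?_⟩
    intro k hk
    exact hbad k hk
  case pos =>
  obtain ⟨k0, hk0⟩ := hbad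
  set Bad : ℕ → Prop := fun k => w.ColliderAt k ∧ ¬ ∃ c ∈ Z, G.Anc (w.vert k) c with hBad
  set S : Finset ℕ := (Finset.range w.len).filter Bad with hS
  have hmemS : ∀ k, Bad k → k ∈ S := by
    intro k hk
    rw [hS, Finset.mem_filter, Finset.mem_range]
    exact ⟨hk.1.1.2, hk⟩
  have hSne : S.Nonempty := ⟨k0, hmemS k0 hk0⟩
  set k := S.max' hSne with hk
  have hkS : k ∈ S := S.max'_mem hSne
  have hkBad : Bad k := (Finset.mem_filter.mp hkS).2
  have hmax : ∀ j, Bad j → j ≤ k := fun j hj => Finset.le_max' S j (hmemS j hj)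
  have hkcol : w.ColliderAt k := hkBad.1
  have hknZ : ¬ ∃ c ∈ Z, G.Anc (w.vert k) c := hkBad.2
  have hanca : G.Anc (w.vert k) a := (hcol k hkcol).resolve_left hknZ
  obtain ⟨m, z, hz0, hzm, hstep⟩ := exists_dirFun hanca
  have hzZ : ∀ t, t ≤ m → z t ∉ Z := by
    intro t ht hmem
    exact hknZ ⟨z t, hmem, hz0 ▸ dirFun_anc hstep 0 t (Nat.zero_le _) ht⟩
  set n := w.len with hndef
  have hk_lt : k < n := hkcol.1.2
  have hk_pos : 0 < k := hkcol.1.1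
  set W : Walk V := ⟨m + (n - k),
      fun p => if p < m then z (m - p) else w.vert (k + (p - m)),
      fun s => if s < m then true else w.intoL (k + (s - m)),
      fun s => if s < m then false else w.intoR (k + (s - m))⟩ with hWdef
  have hWlen : W.len = m + (n - k) := rfl
  have hv_lt : ∀ p, p < m → W.vert p = z (m - p) := by
    intro p hp; show (if p < m then _ else _) = _; rw [if_pos hp]
  have hv_ge : ∀ p, m ≤ p → W.vert p = w.vert (k + (p - m)) := by
    intro p hp; show (if p < m then _ else _) = _; rw [if_neg (by omega)]
  have hv_le : ∀ p, p ≤ m → W.vert p = z (m - p) := by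
    intro p hp
    rcases Nat.lt_or_ge p m with h | h
    · exact hv_lt p h
    · have hp' : p = m := by omega
      subst hp'
      rw [hv_ge p le_rfl]
      simp only [Nat.sub_self, Nat.add_zero]
      exact hz0.symm
  have hL_lt : ∀ s, s < m → W.intoL s = true := by
    intro s hs; show (if s < m then _ else _) = _; rw [if_pos hs]
  have hL_ge : ∀ s, m ≤ s → W.intoL s = w.intoL (k + (s - m)) := by
    intro s hs; show (if s < m then _ else _) = _; rw [if_neg (by omega)]
  have hR_lt : ∀ s, s < m → W.intoR s = false := by
    intro s hs; show (if s < m then _ else _) = _; rw [if_pos hs]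
  have hR_ge : ∀ s, m ≤ s → W.intoR s = w.intoR (k + (s - m)) := by
    intro s hs; show (if s < m then _ else _) = _; rw [if_neg (by omega)]
  refine ⟨W, ?_, ?_, ?_, ?_, ?_, ?_⟩
  · -- Valid
    intro s hs
    have hs' : s < m + (n - k) := hs
    rcases Nat.lt_or_ge s m with h | h
    · refine Or.inr (Or.inl ⟨hL_lt s h, hR_lt s h, ?_⟩)
      have e1 : W.vert s = z (m - s) := hv_lt s h
      have e2 : W.vert (s+1) = z (m - (s+1)) := hv_le (s+1) (by omega)
      rw [e1, e2]
      have := hstep (m - (s+1)) (by omega)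
      have harr : m - (s+1) + 1 = m - s := by omega
      rwa [harr] at this
    · set j := k + (s - m) with hjdef
      have hjn : j < n := by omega
      have e1 : W.vert s = w.vert j := hv_ge s h
      have e2 : W.vert (s+1) = w.vert (j+1) := by
        rw [hv_ge (s+1) (by omega)]; congr 1; omega
      rw [hL_ge s h, hR_ge s h, e1, e2]
      exact hval j hjn
  · -- first
    show W.vert 0 = a
    rcases Nat.eq_zero_or_pos m with hm | hm
    · rw [hv_ge 0 (by omega)]
      simp only [Nat.zero_sub, Nat.add_zero]
      have : z 0 = z m := by rw [hm]
      rw [← hz0, this, hzm]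
    · rw [hv_lt 0 hm, Nat.sub_zero, hzm]
  · -- last
    show W.vert (m + (n - k)) = b
    rw [hv_ge _ (by omega)]
    have : k + (m + (n - k) - m) = n := by omega
    rw [this]; exact hlst
  · -- IntoLast
    refine ⟨by omega, ?_⟩
    show W.intoR (m + (n - k) - 1) = true
    rw [hR_ge _ (by omega)]
    have : k + (m + (n - k) - 1 - m) = n - 1 := by omega
    rw [this]; exact hinto.2
  · -- NCok
    intro p hncp hpZ
    obtain ⟨⟨hp0, hplen⟩, hncm⟩ := hncp
    rcases Nat.lt_or_ge p m with h | h
    · exfalso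
      have : W.vert p = z (m - p) := hv_lt p h
      rw [this] at hpZ
      exact hzZ (m - p) (by omega) hpZ
    · rcases Nat.eq_or_lt_of_le h with h' | h'
      · exfalso
        have : W.vert p = w.vert k := by
          rw [hv_ge p h, ← h']
          simp only [Nat.sub_self, Nat.add_zero]
        rw [this] at hpZ
        exact hknZ ⟨w.vert k, hpZ, Relation.ReflTransGen.refl⟩
      · -- p > m
        set j := k + (p - m) with hjdef
        have hj1 : k < j := by omega
        have hjn : j < n := by omega
        have eL : W.intoL p = w.intoL j := hL_ge p h
        have eR : W.intoR p = w.intoR j := hR_ge p h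
        have eLm : W.intoL (p-1) = w.intoL (j-1) := by
          rw [hL_ge (p-1) (by omega)]; congr 1; omega
        have eRm : W.intoR (p-1) = w.intoR (j-1) := by
          rw [hR_ge (p-1) (by omega)]; congr 1; omega
        have evp : W.vert p = w.vert j := hv_ge p h
        have evm : W.vert (p-1) = w.vert (j-1) := by
          rw [hv_ge (p-1) (by omega)]; congr 1; omega
        have evp1 : W.vert (p+1) = w.vert (j+1) := by
          rw [hv_ge (p+1) (by omega)]; congr 1; omega
        have hncw : w.NonColliderAt j := by
          refine ⟨⟨by omega, hjn⟩, ?_⟩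
          intro ⟨hx, hy⟩
          exact hncm ⟨by rw [eRm]; exact hx, by rw [eL]; exact hy⟩
        have hvZ : w.vert j ∈ Z := by rwa [evp] at hpZ
        have hsccs := hnc j hncw hvZ
        constructor
        · intro hPL
          have : w.PointsLeft j := ⟨by rw [← eLm]; exact hPL.1, by rw [← eRm]; exact hPL.2⟩
          have := hsccs.1 this
          rwa [evp, evm]
        · intro hPR
          have : w.PointsRight j := ⟨by rw [← eL]; exact hPR.1, by rw [← eR]; exact hPR.2⟩
          have := hsccs.2 this
          rwa [evp, evp1]
  · -- ColOk
    intro p hcolp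
    obtain ⟨⟨hp0, hplen⟩, hcr, hcl⟩ := hcolp
    rcases Nat.lt_or_ge p m with h | h
    · exfalso
      rcases Nat.eq_or_lt_of_le (Nat.one_le_iff_ne_zero.mpr (by omega) : 1 ≤ p) with h1 | h1
      · have := hcr
        rw [hR_lt (p-1) (by omega)] at this
        exact absurd this (by simp)
      · have := hcr
        rw [hR_lt (p-1) (by omega)] at this
        exact absurd this (by simp)
    · rcases Nat.eq_or_lt_of_le h with h' | h'
      · exfalso
        rcases Nat.eq_zero_or_pos m with hm | hm
        · omega
        · have := hcr
          rw [hR_lt (p-1) (by omega)] at this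
          exact absurd this (by simp)
      · set j := k + (p - m) with hjdef
        have hj1 : k < j := by omega
        have hjn : j < n := by omega
        have hcolw : w.ColliderAt j := by
          refine ⟨⟨by omega, hjn⟩, ?_, ?_⟩
          · have := hcr
            rw [hR_ge (p-1) (by omega)] at this
            have he : k + (p - 1 - m) = j - 1 := by omega
            rwa [he] at this
          · have := hcl
            rw [hL_ge p h] at this
            exact this
        have hgood : ∃ c ∈ Z, G.Anc (w.vert j) c := by
          by_contra hno
          have : j ≤ k := hmax j ⟨hcolw, hno⟩
          omega
        obtain ⟨d, hdZ, hd⟩ := hgood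
        refine ⟨d, hdZ, ?_⟩
        rwa [hv_ge p h]

/-- A directed path within a strongly connected situation gives a connecting walk. -/
private lemma connInto_of_scc {a b : V} (hab : a ≠ b) (h : G.Scc a b) :
    ConnInto G Z a b := by
  obtain ⟨m, z, hz0, hzm, hstep⟩ := exists_dirFun h.1
  have hm : 0 < m := by
    rcases Nat.eq_zero_or_pos m with h0 | h0
    · exfalso; apply hab; rw [← hz0, ← hzm, h0]
    · exact h0
  refine ⟨⟨m, z, fun _ => false, fun _ => true⟩, ?_, hz0, hzm, ⟨hm, rfl⟩, ?_, ?_⟩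
  · intro s hs; exact Or.inl ⟨rfl, rfl, hstep s hs⟩
  · intro k hk _
    constructor
    · intro hPL
      exact absurd hPL.1 (by simp [Walk.PointsLeft])
    · intro _
      have hk1 : k < m := hk.1.2
      constructor
      · exact Relation.ReflTransGen.single (hstep k hk1)
      · have h1 : G.Anc (z (k+1)) (z m) := dirFun_anc hstep (k+1) m (by omega) le_rfl
        have h2 : G.Anc (z 0) (z k) := dirFun_anc hstep 0 k (by omega) (by omega)
        rw [hzm] at h1
        rw [hz0] at h2
        exact anc_trans h1 (anc_trans h.2 h2)
  · intro k hk
    exact absurd hk.2.2 (by simp)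

/-- From an inducing path from `a` to `b` with `b ∉ an(G,a)` and `b ∈ Z`, extract
a σ-connecting walk from `a` into `b`. -/
private lemma connInto_of_inducing_notAnc {a b : V} {w : Walk V} (hab : a ≠ b)
    (hval : w.ValidOn G) (hfst : w.first = a) (hlst : w.last = b)
    (hpath : w.IsPath) (hind : w.Inducing G) (hbZ : b ∈ Z) (hnanc : ¬ G.Anc b a) :
    ConnInto G Z a b := by
  classical
  have hlen : 0 < w.len := by
    rcases Nat.eq_zero_or_pos w.len with h0 | h0
    · exfalso; apply hab
      rw [← hfst, ← hlst]
      show w.vert 0 = w.vert w.len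
      rw [h0]
    · exact h0
  have hNCok : NCok G Z w := by
    intro k hk _
    exact ⟨fun hPL => (hind.2 k hk).1 hPL, fun hPR => (hind.2 k hk).2 hPR⟩
  have hColPre : ∀ k, w.ColliderAt k →
      (∃ c ∈ Z, G.Anc (w.vert k) c) ∨ G.Anc (w.vert k) a := by
    intro k hk
    rcases hind.1 k hk with h | h
    · rw [hfst] at h; exact Or.inr h
    · rw [hlst] at h; exact Or.inl ⟨b, hbZ, h⟩
  by_cases hR : w.intoR (w.len - 1) = true
  · exact surgery hval hfst hlst ⟨hlen, hR⟩ hNCok hColPre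
  · have hRf : w.intoR (w.len - 1) = false := by
      cases hx : w.intoR (w.len - 1)
      · rfl
      · exact absurd hx hR
    -- every edge with intoR = false is reverse-directed
    have hrev : ∀ s, s < w.len → w.intoR s = false →
        w.intoL s = true ∧ w.intoR s = false ∧ G.dir (w.vert (s+1)) (w.vert s) := by
      intro s hs hf
      rcases hval s hs with ⟨hA, hB, _⟩ | ⟨hA, hB, hC⟩ | ⟨hA, hB, _⟩
      · rw [hf] at hB; exact absurd hB (by simp)
      · exact ⟨hA, hB, hC⟩
      · rw [hf] at hB; exact absurd hB (by simp)
    set Q : ℕ → Prop := fun t => t ≤ w.len - 1 ∧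
        ∀ s, t ≤ s → s ≤ w.len - 1 → (w.intoL s = true ∧ w.intoR s = false) with hQ
    have hQtop : Q (w.len - 1) := by
      refine ⟨le_rfl, ?_⟩
      intro s hs1 hs2
      have hseq : s = w.len - 1 := by omega
      have hx := hrev (w.len - 1) (by omega) hRf
      rw [hseq]
      exact ⟨hx.1, hx.2.1⟩
    have hQex : ∃ t, Q t := ⟨w.len - 1, hQtop⟩
    set t0 := Nat.find hQex with ht0
    have hQt0 : Q t0 := Nat.find_spec hQex
    have ht0le : t0 ≤ w.len - 1 := hQt0.1
    -- chain: b is an ancestor of every vertex from t0 on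
    have hchain : ∀ jd, jd ≤ w.len - t0 → G.Anc b (w.vert (w.len - jd)) := by
      intro jd
      induction jd with
      | zero =>
          intro _
          simp only [Nat.sub_zero]
          rw [← hlst]
          exact Relation.ReflTransGen.refl
      | succ jj ih =>
          intro hle
          have hanc := ih (by omega)
          set s := w.len - jj - 1 with hsdef
          have hs1 : t0 ≤ s := by omega
          have hs2 : s ≤ w.len - 1 := by omega
          have hrevs := hQt0.2 s hs1 hs2
          have hdir := (hrev s (by omega) hrevs.2).2.2
          have hse : s + 1 = w.len - jj := by omega
          rw [hse] at hdir
          have : w.len - (jj + 1) = s := by omega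
          rw [this]
          exact Relation.ReflTransGen.tail hanc hdir
    have hancb : G.Anc b (w.vert t0) := by
      have := hchain (w.len - t0) le_rfl
      have he : w.len - (w.len - t0) = t0 := by omega
      rwa [he] at this
    rcases Nat.eq_zero_or_pos t0 with ht00 | ht00
    · exfalso
      apply hnanc
      rw [← hfst]
      show G.Anc b (w.vert 0)
      rw [← ht00]
      exact hancb
    · -- t0 ≥ 1 : collider at t0
      have hnQ : ¬ Q (t0 - 1) := Nat.find_min hQex (by omega)
      have hRt : w.intoR (t0 - 1) = true := by
        by_contra hct
        have hcf : w.intoR (t0 - 1) = false := by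
          cases hx : w.intoR (t0 - 1)
          · rfl
          · exact absurd hx hct
        apply hnQ
        refine ⟨by omega, ?_⟩
        intro s hs1 hs2
        rcases Nat.eq_or_lt_of_le hs1 with he | hlt
        · have := hrev (t0 - 1) (by omega) hcf
          rw [← he]
          exact ⟨this.1, this.2.1⟩
        · exact hQt0.2 s (by omega) hs2
      have hcolt0 : w.ColliderAt t0 := by
        refine ⟨⟨ht00, by omega⟩, hRt, (hQt0.2 t0 le_rfl hQt0.1).1⟩
      have hanct0b : G.Anc (w.vert t0) b := by
        rcases hind.1 t0 hcolt0 with h | h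
        · exfalso
          rw [hfst] at h
          exact hnanc (anc_trans hancb h)
        · rwa [hlst] at h
      have hne : w.vert t0 ≠ b := by
        intro hcon
        have : w.vert t0 = w.vert w.len := by rw [hcon, ← hlst]; rfl
        have := hpath t0 (by omega) w.len le_rfl this
        omega
      obtain ⟨m, z, hz0, hzm, hstep⟩ := exists_dirFun hanct0b
      have hm : 0 < m := by
        rcases Nat.eq_zero_or_pos m with h0 | h0
        · exfalso; apply hne; rw [← hz0, ← hzm, h0]
        · exact h0
      -- helper ancestries
      have hzscc : ∀ s, s ≤ m → G.Anc (z s) (w.vert t0) := by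
        intro s hs
        have h1 : G.Anc (z s) (z m) := dirFun_anc hstep s m hs le_rfl
        rw [hzm] at h1
        exact anc_trans h1 hancb
      have hzfwd : ∀ s, s ≤ m → G.Anc (w.vert t0) (z s) := by
        intro s hs
        have h2 : G.Anc (z 0) (z s) := dirFun_anc hstep 0 s (by omega) hs
        rwa [hz0] at h2
      set W : Walk V := ⟨t0 + m,
          fun p => if p < t0 then w.vert p else z (p - t0),
          fun s => if s < t0 then w.intoL s else false,
          fun s => if s < t0 then w.intoR s else true⟩ with hWdef
      have hWlen : W.len = t0 + m := rfl
      have hv_lt : ∀ p, p < t0 → W.vert p = w.vert p := by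
        intro p hp; show (if p < t0 then _ else _) = _; rw [if_pos hp]
      have hv_ge : ∀ p, t0 ≤ p → W.vert p = z (p - t0) := by
        intro p hp; show (if p < t0 then _ else _) = _; rw [if_neg (by omega)]
      have hv_le : ∀ p, p ≤ t0 → W.vert p = w.vert p := by
        intro p hp
        rcases Nat.lt_or_ge p t0 with h | h
        · exact hv_lt p h
        · have hp' : p = t0 := by omega
          rw [hp', hv_ge t0 le_rfl, Nat.sub_self]
          exact hz0
      have hL_lt : ∀ s, s < t0 → W.intoL s = w.intoL s := by
        intro s hs; show (if s < t0 then _ else _) = _; rw [if_pos hs]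
      have hL_ge : ∀ s, t0 ≤ s → W.intoL s = false := by
        intro s hs; show (if s < t0 then _ else _) = _; rw [if_neg (by omega)]
      have hR_lt : ∀ s, s < t0 → W.intoR s = w.intoR s := by
        intro s hs; show (if s < t0 then _ else _) = _; rw [if_pos hs]
      have hR_ge : ∀ s, t0 ≤ s → W.intoR s = true := by
        intro s hs; show (if s < t0 then _ else _) = _; rw [if_neg (by omega)]
      have hWval : W.ValidOn G := by
        intro s hs
        rcases Nat.lt_or_ge s t0 with h | h
        · have e1 : W.vert s = w.vert s := hv_lt s h
          have e2 : W.vert (s+1) = w.vert (s+1) := hv_le (s+1) (by omega)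
          rw [hL_lt s h, hR_lt s h, e1, e2]
          exact hval s (by omega)
        · refine Or.inl ⟨hL_ge s h, hR_ge s h, ?_⟩
          have e1 : W.vert s = z (s - t0) := hv_ge s h
          have e2 : W.vert (s+1) = z (s - t0 + 1) := by
            rw [hv_ge (s+1) (by omega)]; congr 1; omega
          rw [e1, e2]
          exact hstep (s - t0) (by omega)
      have hWfst : W.first = a := by
        show W.vert 0 = a
        rw [hv_lt 0 ht00, ← hfst]
        rfl
      have hWlst : W.last = b := by
        show W.vert (t0 + m) = b
        rw [hv_ge _ (by omega)]
        have : t0 + m - t0 = m := by omega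
        rw [this]; exact hzm
      have hWinto : W.IntoLast := by
        refine ⟨by omega, ?_⟩
        show W.intoR (t0 + m - 1) = true
        exact hR_ge _ (by omega)
      have hWnc : NCok G Z W := by
        intro p hncp hpZ
        obtain ⟨⟨hp0, hplen⟩, hncm⟩ := hncp
        rcases Nat.lt_or_ge p t0 with h | h
        · -- transported from the inducing path
          have hncw : w.NonColliderAt p := by
            refine ⟨⟨hp0, by omega⟩, ?_⟩
            intro ⟨hx, hy⟩
            exact hncm ⟨by rw [hR_lt (p-1) (by omega)]; exact hx,
                        by rw [hL_lt p h]; exact hy⟩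
          have hsccs := hind.2 p hncw
          constructor
          · intro hPL
            have : w.PointsLeft p := ⟨by rw [← hL_lt (p-1) (by omega)]; exact hPL.1,
                                      by rw [← hR_lt (p-1) (by omega)]; exact hPL.2⟩
            have := hsccs.1 this
            rwa [hv_lt p h, hv_le (p-1) (by omega)]
          · intro hPR
            have : w.PointsRight p := ⟨by rw [← hL_lt p h]; exact hPR.1,
                                       by rw [← hR_lt p h]; exact hPR.2⟩
            have := hsccs.2 this
            rwa [hv_lt p h, hv_le (p+1) (by omega)]
        · rcases Nat.eq_or_lt_of_le h with h' | h'
          · -- p = t0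
            constructor
            · intro hPL
              exfalso
              have := hPL.2
              rw [hR_lt (p-1) (by omega)] at this
              have he : p - 1 = t0 - 1 := by omega
              rw [he, hRt] at this
              exact absurd this (by simp)
            · intro _
              have evp : W.vert p = w.vert t0 := by
                rw [hv_ge p h, ← h']
                simp only [Nat.sub_self]
                exact hz0
              have evp1 : W.vert (p+1) = z 1 := by
                rw [hv_ge (p+1) (by omega)]; congr 1; omega
              rw [evp, evp1]
              exact ⟨hzfwd 1 (by omega), hzscc 1 (by omega)⟩
          · -- p > t0
            constructor
            · intro hPL
              exfalso
              have := hPL.2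
              rw [hR_ge (p-1) (by omega)] at this
              exact absurd this (by simp)
            · intro _
              have evp : W.vert p = z (p - t0) := hv_ge p h
              have evp1 : W.vert (p+1) = z (p - t0 + 1) := by
                rw [hv_ge (p+1) (by omega)]; congr 1; omega
              rw [evp, evp1]
              refine ⟨Relation.ReflTransGen.single (hstep (p - t0) (by omega)), ?_⟩
              exact anc_trans (hzscc (p - t0 + 1) (by omega)) (hzfwd (p - t0) (by omega))
      have hWcol : ∀ p, W.ColliderAt p →
          (∃ c ∈ Z, G.Anc (W.vert p) c) ∨ G.Anc (W.vert p) a := by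
        intro p hcolp
        obtain ⟨⟨hp0, hplen⟩, hcr, hcl⟩ := hcolp
        rcases Nat.lt_or_ge p t0 with h | h
        · have hcolw : w.ColliderAt p := by
            refine ⟨⟨hp0, by omega⟩, ?_, ?_⟩
            · rw [← hR_lt (p-1) (by omega)]; exact hcr
            · rw [← hL_lt p h]; exact hcl
          rcases hind.1 p hcolw with hh | hh
          · rw [hfst] at hh
            exact Or.inr (by rwa [hv_lt p h])
          · rw [hlst] at hh
            exact Or.inl ⟨b, hbZ, by rwa [hv_lt p h]⟩
        · exfalso
          have := hcl
          rw [hL_ge p h] at this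
          exact absurd this (by simp)
      exact surgery hWval hWfst hWlst hWinto hWnc hWcol

/-- Key triple lemma: with `b ∈ Z` σ-separating `a` from `c`, inducing paths
from `a` and from `c` to `b`, and either `b ∉ an(G,a)` or `a,b` strongly
connected, `b` must be an ancestor of `c`. -/
private lemma triple_anc_core {a b c : V}
    (hiab : G.InducingPath a b) (hicb : G.InducingPath c b)
    (hab : a ≠ b) (hcb : c ≠ b) (hbZ : b ∈ Z) (haZ : a ∉ Z) (hcZ : c ∉ Z)
    (hsig : G.SigmaSep {a} {c} Z)
    (h1 : ¬ G.Anc b a ∨ G.Scc a b) : G.Anc b c := by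
  by_contra hn
  have c2 : ConnInto G Z c b := by
    obtain ⟨w, hv, hf, hl, hp, hi⟩ := hicb
    exact connInto_of_inducing_notAnc hcb hv hf hl hp hi hbZ hn
  have c1 : ConnInto G Z a b := by
    rcases h1 with h | h
    · obtain ⟨w, hv, hf, hl, hp, hi⟩ := hiab
      exact connInto_of_inducing_notAnc hab hv hf hl hp hi hbZ h
    · exact connInto_of_scc hab h
  exact not_sigmaSep_of_connInto c1 c2 hbZ haZ hcZ hsig

private lemma adj_ne {a b : V} (h : P.adj a b) : a ≠ b := by
  intro hc; subst hc; exact P.adj_irrefl a h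

/-- Along an uncovered possibly directed path, ancestry of the first edge
propagates to the endpoint. -/
private lemma path_anc (hPG : P.Contains G) (SepSet : V → V → Set V)
    (hSep : ∀ a c, a ≠ c → ¬ P.adj a c →
      a ∉ SepSet a c ∧ c ∉ SepSet a c ∧ G.SigmaSep {a} {c} (SepSet a c))
    (hR0 : ∀ a b c, a ≠ c → P.adj a b → P.adj b c → ¬ P.adj a c →
      ((P.mark a b = Mark.arrow ∧ P.mark c b = Mark.arrow) ↔ b ∉ SepSet a c)) :
    ∀ n, ∀ p : ℕ → V, 0 < n → P.PossiblyDirectedPathOn n p → P.UncoveredOn n p →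
      G.Anc (p 0) (p 1) → G.Anc (p 0) (p n) := by
  intro n
  induction n with
  | zero => intro p h; omega
  | succ n ih =>
      intro p hpos hpd hunc h01
      rcases Nat.eq_zero_or_pos n with h0 | h0
      · subst h0; exact h01
      · have hp02 : p 0 ≠ p 2 := by
          intro hcon
          have := hpd.2 0 (by omega) 2 (by omega) hcon
          omega
        have hp12 : p 1 ≠ p 2 := by
          intro hcon
          have := hpd.2 1 (by omega) 2 (by omega) hcon
          omega
        have hp01 : p 0 ≠ p 1 := by
          intro hcon
          have := hpd.2 0 (by omega) 1 (by omega) hcon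
          omega
        have hadj01 : P.adj (p 0) (p 1) := (hpd.1 0 (by omega)).1
        have hadj12 : P.adj (p 1) (p 2) := (hpd.1 1 (by omega)).1
        have hnadj02 : ¬ P.adj (p 0) (p 2) := hunc 0 (by omega)
        have hmark : P.mark (p 2) (p 1) ≠ Mark.arrow := (hpd.1 1 (by omega)).2
        have hbin : p 1 ∈ SepSet (p 0) (p 2) := by
          by_contra hb
          exact hmark ((hR0 (p 0) (p 1) (p 2) hp02 hadj01 hadj12 hnadj02).mpr hb).2
        have hZs := hSep (p 0) (p 2) hp02 hnadj02
        have h12 : G.Anc (p 1) (p 2) := by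
          refine triple_anc_core (Z := SepSet (p 0) (p 2))
            ((hPG.1 (p 0) (p 1) hp01).mp hadj01)
            ((hPG.1 (p 2) (p 1) hp12.symm).mp (P.adj_symm _ _ hadj12))
            hp01 hp12.symm hbin hZs.1 hZs.2.1 hZs.2.2 ?_
          rcases Classical.em (G.Anc (p 1) (p 0)) with h | h
          · exact Or.inr ⟨h01, h⟩
          · exact Or.inl h
        have hshift := ih (fun t => p (t+1)) h0
          ⟨fun k hk => hpd.1 (k+1) (by omega),
           fun x hx y hy hxy => by
             have := hpd.2 (x+1) (by omega) (y+1) (by omega) hxy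
             omega⟩
          (fun k hk => hunc (k+1) (by omega)) h12
        exact anc_trans h01 hshift

end Aux

/-- let `P` be a DPAG containing the DMG `G` whose unshielded triples
are oriented according to FCI rule R0 with respect to σ-separating sets of `G`.
If there is a directed path from `i` to `j` in `P`, or two uncovered possibly
directed paths `i,u,…,j` and `i,v,…,j` with `u`, `v` distinct and non-adjacent in
`P`, then `i ∈ an(G,j)`. -/
theorem statement6 (G : DMG V) (P : DPAG V) (hPG : P.Contains G)
    (SepSet : V → V → Set V)
    (hSep : ∀ a c, a ≠ c → ¬ P.adj a c →
      a ∉ SepSet a c ∧ c ∉ SepSet a c ∧ G.SigmaSep {a} {c} (SepSet a c))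
    (hR0 : ∀ a b c, a ≠ c → P.adj a b → P.adj b c → ¬ P.adj a c →
      ((P.mark a b = Mark.arrow ∧ P.mark c b = Mark.arrow) ↔ b ∉ SepSet a c))
    (i j : V) (hij : i ≠ j)
    (h : Relation.TransGen P.DirEdge i j ∨
      ∃ u v : V, u ≠ v ∧ ¬ P.adj u v ∧
        (∃ n, ∃ p : ℕ → V, 0 < n ∧ p 0 = i ∧ p 1 = u ∧ p n = j ∧
          P.PossiblyDirectedPathOn n p ∧ P.UncoveredOn n p) ∧
        (∃ n, ∃ p : ℕ → V, 0 < n ∧ p 0 = i ∧ p 1 = v ∧ p n = j ∧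
          P.PossiblyDirectedPathOn n p ∧ P.UncoveredOn n p)) :
    G.Anc i j := by
  have hdir : ∀ x y : V, Relation.TransGen P.DirEdge x y → G.Anc x y := by
    intro x y hxy
    induction hxy with
    | single h => exact hPG.2.2 _ _ h
    | tail _ h2 ih => exact anc_trans ih (hPG.2.2 _ _ h2)
  rcases h with h | ⟨u, v, huv, hnadj,
      ⟨n, p, hn, hp0, hp1, hpn, hpd, hunc⟩, ⟨n', q, hn', hq0, hq1, hqn', hqd, hqunc⟩⟩
  · exact hdir i j h
  · have hiu : P.adj i u := by
      have := (hpd.1 0 hn).1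
      rwa [hp0, hp1] at this
    have hiv : P.adj i v := by
      have := (hqd.1 0 hn').1
      rwa [hq0, hq1] at this
    have hmarkui : P.mark u i ≠ Mark.arrow := by
      have := (hpd.1 0 hn).2
      rwa [hp0, hp1] at this
    have hbin : i ∈ SepSet u v := by
      by_contra hb
      exact hmarkui ((hR0 u i v huv (P.adj_symm _ _ hiu) hiv hnadj).mpr hb).1
    have hZs := hSep u v huv hnadj
    have key : G.Anc i u ∨ G.Anc i v := by
      by_contra hcon
      push_neg at hcon
      have c1 : ConnInto G (SepSet u v) u i := by
        obtain ⟨w, hv, hf, hl, hp, hi⟩ := (hPG.1 u i (adj_ne hiu).symm).mp (P.adj_symm _ _ hiu)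
        exact connInto_of_inducing_notAnc (adj_ne hiu).symm hv hf hl hp hi hbin hcon.1
      have c2 : ConnInto G (SepSet u v) v i := by
        obtain ⟨w, hv, hf, hl, hp, hi⟩ := (hPG.1 v i (adj_ne hiv).symm).mp (P.adj_symm _ _ hiv)
        exact connInto_of_inducing_notAnc (adj_ne hiv).symm hv hf hl hp hi hbin hcon.2
      exact not_sigmaSep_of_connInto c1 c2 hbin hZs.1 hZs.2.1 hZs.2.2
    rcases key with hk | hk
    · have := path_anc hPG SepSet hSep hR0 n p hn hpd hunc (by rw [hp0, hp1]; exact hk)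
      rw [hp0, hpn] at this
      exact this
    · have := path_anc hPG SepSet hSep hR0 n' q hn' hqd hqunc (by rw [hq0, hq1]; exact hk)
      rw [hq0, hqn'] at this
      exact this

end CausalGraphs
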